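/- arXiv:2002.04720 — 4 statements merged into one kernel-verified Lean document; each statement's English description precedes it below -/
import Mathlib

section
/- Let Ω be a finite type, Q a PMF on Ω with full support, A ⊆ Ω nonempty with complement B nonempty, and λ > 0. Then any maximizer P* of the objective F(P) = log P(A) − λ·KL(P‖Q) over all PMFs P on Ω satisfies: P* restricted to A is proportional to Q restricted to A, and P* restricted to B is proportional to Q restricted to B. That is, P*(y) = α·Q(y)/Q(A)·1[y∈A] + (1−α)·Q(y)/Q(B)·1[y∈B] for some α ∈ [0,1]. -/
/-!
Fixing the mass `α = P(A)` fixes `log P(A)`, so a maximizer minimizes `KL(P‖Q)` among the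
distributions with masses `α` on `A` and `1 - α` on `Aᶜ`. By the log-sum inequality (Jensen for
`x ↦ x log x`), the part of `KL(P‖Q)` summed over a block is at least its mass times
`log (mass / Q-mass)`, with equality exactly when `P` is proportional to `Q` on that block. The
distribution proportional to `Q` on both blocks attains both bounds, so the maximizer must be it.
-/

open Finset

noncomputable def KL {Ω : Type*} [Fintype Ω] (P Q : Ω → ℝ) : ℝ :=
  ∑ y, P y * Real.log (P y / Q y)

/-- The penalized objective F(P) = log P(A) − λ·KL(P‖Q). -/
noncomputable def obj {Ω : Type*} [Fintype Ω] [DecidableEq Ω]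
    (lam : ℝ) (Q : Ω → ℝ) (A : Finset Ω) (P : Ω → ℝ) : ℝ :=
  Real.log (∑ y ∈ A, P y) - lam * KL P Q

open Real

section LogSum

variable {ι : Type*} {s : Finset ι} {p q r : ι → ℝ}

lemma sum_eq_of_eq_rescale (hq : ∀ i ∈ s, 0 < q i)
    (hr : ∀ i ∈ s, r i = (∑ j ∈ s, p j) / (∑ j ∈ s, q j) * q i) :
    ∑ i ∈ s, r i = ∑ i ∈ s, p i := by
  rw [sum_congr rfl hr, ← mul_sum]
  rcases s.eq_empty_or_nonempty with rfl | hs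
  · simp
  · exact div_mul_cancel₀ _ (sum_pos hq hs).ne'

lemma sum_mul_log_div_of_eq_rescale (hq : ∀ i ∈ s, 0 < q i)
    (hr : ∀ i ∈ s, r i = (∑ j ∈ s, p j) / (∑ j ∈ s, q j) * q i) :
    ∑ i ∈ s, r i * log (r i / q i) =
      (∑ i ∈ s, p i) * log ((∑ i ∈ s, p i) / ∑ i ∈ s, q i) := by
  have hterm : ∀ i ∈ s, r i * log (r i / q i) =
      r i * log ((∑ j ∈ s, p j) / ∑ j ∈ s, q j) := by
    intro i hi
    rw [hr i hi, mul_div_cancel_right₀ _ (hq i hi).ne']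
  rw [sum_congr rfl hterm, ← sum_mul, sum_eq_of_eq_rescale hq hr]

lemma sum_div_smul_div_mul (hq : ∀ i ∈ s, q i ≠ 0) (c : ℝ) (g : ι → ℝ) :
    ∑ i ∈ s, (q i / c) • (p i / q i * g i) = (∑ i ∈ s, p i * g i) / c := by
  rw [sum_div]
  refine sum_congr rfl fun i hi => ?_
  have := hq i hi
  rw [smul_eq_mul]
  field_simp

lemma sum_div_smul_div (hq : ∀ i ∈ s, q i ≠ 0) :
    ∑ i ∈ s, (q i / ∑ j ∈ s, q j) • (p i / q i) = (∑ i ∈ s, p i) / ∑ i ∈ s, q i := by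
  simpa using sum_div_smul_div_mul hq (∑ j ∈ s, q j) 1

lemma div_sum_pos (hq : ∀ i ∈ s, 0 < q i) (hs : s.Nonempty) :
    ∀ i ∈ s, 0 < q i / ∑ j ∈ s, q j :=
  fun i hi => div_pos (hq i hi) (sum_pos hq hs)

lemma sum_div_sum_eq_one (hq : ∀ i ∈ s, 0 < q i) (hs : s.Nonempty) :
    ∑ i ∈ s, q i / ∑ j ∈ s, q j = 1 := by
  rw [← sum_div, div_self (sum_pos hq hs).ne']

-- The two sides of the log-sum inequality are `∑ q` times the two sides of Jensen's inequality
-- for `x ↦ x log x` at the points `p i / q i` with weights `q i / ∑ q`.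
lemma mul_log_sum_div_eq_mul_smul (hq : ∀ i ∈ s, 0 < q i) (hs : s.Nonempty) :
    (∑ i ∈ s, p i) * log ((∑ i ∈ s, p i) / ∑ i ∈ s, q i) = (∑ j ∈ s, q j) *
      ((∑ i ∈ s, (q i / ∑ j ∈ s, q j) • (p i / q i)) *
        log (∑ i ∈ s, (q i / ∑ j ∈ s, q j) • (p i / q i))) := by
  rw [sum_div_smul_div (fun i hi => (hq i hi).ne'), ← mul_assoc,
    mul_div_cancel₀ _ (sum_pos hq hs).ne']

lemma sum_mul_log_div_eq_mul_sum_smul (hq : ∀ i ∈ s, 0 < q i) (hs : s.Nonempty) :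
    ∑ i ∈ s, p i * log (p i / q i) = (∑ j ∈ s, q j) *
      ∑ i ∈ s, (q i / ∑ j ∈ s, q j) • (p i / q i * log (p i / q i)) := by
  rw [sum_div_smul_div_mul (fun i hi => (hq i hi).ne'), mul_div_cancel₀ _ (sum_pos hq hs).ne']

/-- The log-sum inequality. -/
theorem mul_log_sum_div_le_sum_mul_log_div (hq : ∀ i ∈ s, 0 < q i) (hp : ∀ i ∈ s, 0 ≤ p i) :
    (∑ i ∈ s, p i) * log ((∑ i ∈ s, p i) / ∑ i ∈ s, q i) ≤ ∑ i ∈ s, p i * log (p i / q i) := by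
  rcases s.eq_empty_or_nonempty with rfl | hs
  · simp
  rw [mul_log_sum_div_eq_mul_smul hq hs, sum_mul_log_div_eq_mul_sum_smul hq hs]
  exact mul_le_mul_of_nonneg_left
    (strictConvexOn_mul_log.convexOn.map_sum_le (fun i hi => (div_sum_pos hq hs i hi).le)
      (sum_div_sum_eq_one hq hs) fun i hi => div_nonneg (hp i hi) (hq i hi).le)
    (sum_pos hq hs).le

theorem sum_mul_log_div_eq_iff (hq : ∀ i ∈ s, 0 < q i) (hp : ∀ i ∈ s, 0 ≤ p i) :
    ∑ i ∈ s, p i * log (p i / q i) = (∑ i ∈ s, p i) * log ((∑ i ∈ s, p i) / ∑ i ∈ s, q i) ↔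
      ∀ i ∈ s, p i = (∑ j ∈ s, p j) / (∑ j ∈ s, q j) * q i := by
  rcases s.eq_empty_or_nonempty with rfl | hs
  · simp
  rw [mul_log_sum_div_eq_mul_smul hq hs, sum_mul_log_div_eq_mul_sum_smul hq hs,
    mul_right_inj' (sum_pos hq hs).ne', eq_comm,
    strictConvexOn_mul_log.map_sum_eq_iff (div_sum_pos hq hs) (sum_div_sum_eq_one hq hs)
      fun i hi => div_nonneg (hp i hi) (hq i hi).le,
    sum_div_smul_div fun i hi => (hq i hi).ne']
  exact forall₂_congr fun i hi => div_eq_iff (hq i hi).ne'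

end LogSum

section CondMixture

variable {Ω : Type*} [Fintype Ω] [DecidableEq Ω] {A : Finset Ω} {P Q : Ω → ℝ}

noncomputable def condMixture (A : Finset Ω) (P Q : Ω → ℝ) (y : Ω) : ℝ :=
  if y ∈ A then (∑ z ∈ A, P z) / (∑ z ∈ A, Q z) * Q y
  else (∑ z ∈ Aᶜ, P z) / (∑ z ∈ Aᶜ, Q z) * Q y

lemma condMixture_of_mem {y : Ω} (hy : y ∈ A) :
    condMixture A P Q y = (∑ z ∈ A, P z) / (∑ z ∈ A, Q z) * Q y := if_pos hy

lemma condMixture_of_mem_compl {y : Ω} (hy : y ∈ Aᶜ) :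
    condMixture A P Q y = (∑ z ∈ Aᶜ, P z) / (∑ z ∈ Aᶜ, Q z) * Q y :=
  if_neg (mem_compl.mp hy)

lemma condMixture_nonneg (hQ : ∀ y, 0 < Q y) (hP : ∀ y, 0 ≤ P y) (y : Ω) :
    0 ≤ condMixture A P Q y := by
  unfold condMixture
  split_ifs <;> exact mul_nonneg (div_nonneg (sum_nonneg fun z _ => hP z)
    (sum_nonneg fun z _ => (hQ z).le)) (hQ y).le

lemma sum_condMixture_of_mem (hQ : ∀ y, 0 < Q y) :
    ∑ y ∈ A, condMixture A P Q y = ∑ y ∈ A, P y :=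
  sum_eq_of_eq_rescale (fun y _ => hQ y) fun _ => condMixture_of_mem

lemma sum_condMixture (hQ : ∀ y, 0 < Q y) : ∑ y, condMixture A P Q y = ∑ y, P y := by
  rw [← sum_add_sum_compl A, ← sum_add_sum_compl A P, sum_condMixture_of_mem hQ,
    sum_eq_of_eq_rescale (r := condMixture A P Q) (fun y _ => hQ y)
      fun _ => condMixture_of_mem_compl]

lemma KL_eq_sum_add_sum_compl (A : Finset Ω) (P Q : Ω → ℝ) :
    KL P Q = ∑ y ∈ A, P y * log (P y / Q y) + ∑ y ∈ Aᶜ, P y * log (P y / Q y) :=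
  (sum_add_sum_compl A _).symm

lemma KL_condMixture (hQ : ∀ y, 0 < Q y) :
    KL (condMixture A P Q) Q =
      (∑ y ∈ A, P y) * log ((∑ y ∈ A, P y) / ∑ y ∈ A, Q y) +
        (∑ y ∈ Aᶜ, P y) * log ((∑ y ∈ Aᶜ, P y) / ∑ y ∈ Aᶜ, Q y) := by
  rw [KL_eq_sum_add_sum_compl A,
    sum_mul_log_div_of_eq_rescale (r := condMixture A P Q) (fun y _ => hQ y)
      fun _ => condMixture_of_mem,
    sum_mul_log_div_of_eq_rescale (r := condMixture A P Q) (fun y _ => hQ y)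
      fun _ => condMixture_of_mem_compl]

theorem eq_condMixture_of_KL_le (hQ : ∀ y, 0 < Q y) (hP : ∀ y, 0 ≤ P y)
    (hKL : KL P Q ≤ KL (condMixture A P Q) Q) (y : Ω) : P y = condMixture A P Q y := by
  have hQs {s : Finset Ω} : ∀ y ∈ s, 0 < Q y := fun y _ => hQ y
  have hPs {s : Finset Ω} : ∀ y ∈ s, 0 ≤ P y := fun y _ => hP y
  have hA := mul_log_sum_div_le_sum_mul_log_div (s := A) hQs hPs
  have hB := mul_log_sum_div_le_sum_mul_log_div (s := Aᶜ) hQs hPs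
  rw [KL_condMixture hQ, KL_eq_sum_add_sum_compl A] at hKL
  by_cases hy : y ∈ A
  · rw [condMixture_of_mem hy]
    exact (sum_mul_log_div_eq_iff hQs hPs).mp (by linarith) y hy
  · rw [← mem_compl] at hy
    rw [condMixture_of_mem_compl hy]
    exact (sum_mul_log_div_eq_iff hQs hPs).mp (by linarith) y hy

end CondMixture

theorem maximizer_is_mixture_of_conditionals_general
    {Ω : Type*} [Fintype Ω] [DecidableEq Ω]
    (lam : ℝ) (hlam : 0 < lam)
    (Q : Ω → ℝ) (hQpos : ∀ y, 0 < Q y)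
    (A : Finset Ω)
    (Pstar : Ω → ℝ) (hPstar0 : ∀ y, 0 ≤ Pstar y) (hPstar1 : ∑ y, Pstar y = 1)
    (hmax : ∀ P : Ω → ℝ, (∀ y, 0 ≤ P y) → (∑ y, P y) = 1 →
      obj lam Q A P ≤ obj lam Q A Pstar) :
    ∃ α ∈ Set.Icc (0:ℝ) 1, ∀ y,
      Pstar y = if y ∈ A then α * Q y / (∑ z ∈ A, Q z)
                else (1 - α) * Q y / (∑ z ∈ Aᶜ, Q z) := by
  have hKL : KL Pstar Q ≤ KL (condMixture A Pstar Q) Q := by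
    have h := hmax (condMixture A Pstar Q) (condMixture_nonneg hQpos hPstar0)
      (by rw [sum_condMixture hQpos, hPstar1])
    rw [obj, obj, sum_condMixture_of_mem hQpos] at h
    exact le_of_mul_le_mul_left (by linarith) hlam
  have hmassB : ∑ z ∈ Aᶜ, Pstar z = 1 - ∑ z ∈ A, Pstar z := by
    rw [← hPstar1, ← sum_add_sum_compl A]
    ring
  refine ⟨∑ z ∈ A, Pstar z, ⟨sum_nonneg fun z _ => hPstar0 z, ?_⟩, fun y => ?_⟩
  · linarith [sum_nonneg (s := Aᶜ) fun z _ => hPstar0 z]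
  · rw [eq_condMixture_of_KL_le hQpos hPstar0 hKL y, condMixture, hmassB]
    split_ifs <;> ring

/-- Any maximizer of log P(A) − λ KL(P‖Q) over all PMFs is a mixture of the
conditionals of Q on A and on B = Aᶜ. -/
theorem maximizer_is_mixture_of_conditionals
    {Ω : Type*} [Fintype Ω] [DecidableEq Ω]
    (lam : ℝ) (hlam : 0 < lam)
    (Q : Ω → ℝ) (hQpos : ∀ y, 0 < Q y) (hQ1 : ∑ y, Q y = 1)
    (A : Finset Ω) (hA : A.Nonempty) (hB : Aᶜ.Nonempty)
    (Pstar : Ω → ℝ) (hPstar0 : ∀ y, 0 ≤ Pstar y) (hPstar1 : ∑ y, Pstar y = 1)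
    (hmax : ∀ P : Ω → ℝ, (∀ y, 0 ≤ P y) → (∑ y, P y) = 1 →
      obj lam Q A P ≤ obj lam Q A Pstar) :
    ∃ α ∈ Set.Icc (0:ℝ) 1, ∀ y,
      Pstar y = if y ∈ A then α * Q y / (∑ z ∈ A, Q z)
                else (1 - α) * Q y / (∑ z ∈ Aᶜ, Q z) :=
  maximizer_is_mixture_of_conditionals_general lam hlam Q hQpos A Pstar hPstar0 hPstar1 hmax
end

section
/- Fix λ > 0 and a ∈ (0,1). Let α* ∈ (0,1) be the unique maximizer of g(α) = log α − λ·(α log(α/a) + (1−α) log((1−α)/(1−a))). Then logit(α*) ≥ logit(a) + 1/λ, where logit(x) = log(x/(1−x)). -/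
/-- g(α) = log α − λ·KL(Ber(α)‖Ber(a)). -/
noncomputable def g (lam a : ℝ) : ℝ → ℝ :=
  fun α => Real.log α -
    lam * (α * Real.log (α / a) + (1 - α) * Real.log ((1 - α) / (1 - a)))

/-- logit(x) = log(x/(1−x)). -/
noncomputable def logit (x : ℝ) : ℝ := Real.log (x / (1 - x))

/-!
At the interior maximizer the derivative `g'(α) = 1/α − λ (logit α − logit a)` vanishes,
so `λ (logit α* − logit a) = 1/α* ≥ 1`.
-/

open Real

theorem hasDerivAt_mul_log_div {x c : ℝ} (hx : x ≠ 0) (hc : c ≠ 0) :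
    HasDerivAt (fun y => y * log (y / c)) (log (x / c) + 1) x := by
  have hlog := ((hasDerivAt_id' x).div_const c).log (div_ne_zero hx hc)
  refine ((hasDerivAt_id' x).mul hlog).congr_deriv ?_
  field_simp

theorem logit_sub_logit {x a : ℝ} (hx : x ≠ 0) (hx' : 1 - x ≠ 0) (ha : a ≠ 0)
    (ha' : 1 - a ≠ 0) :
    logit x - logit a = log (x / a) - log ((1 - x) / (1 - a)) := by
  simp only [logit]
  rw [log_div hx ha, log_div hx' ha', log_div hx hx', log_div ha ha']
  ring

theorem hasDerivAt_g (lam : ℝ) {a x : ℝ} (hx : x ≠ 0) (hx' : 1 - x ≠ 0) (ha : a ≠ 0)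
    (ha' : 1 - a ≠ 0) :
    HasDerivAt (g lam a) (x⁻¹ - lam * (logit x - logit a)) x := by
  have hpos := hasDerivAt_mul_log_div hx ha
  have hneg := (hasDerivAt_mul_log_div hx' ha').comp x ((hasDerivAt_id' x).const_sub 1)
  refine ((hasDerivAt_log hx).sub ((hpos.add hneg).const_mul lam)).congr_deriv ?_
  rw [logit_sub_logit hx hx' ha ha']
  ring

theorem inv_eq_mul_logit_sub_of_isLocalMax {lam a x : ℝ} (hx : x ≠ 0) (hx' : 1 - x ≠ 0)
    (ha : a ≠ 0) (ha' : 1 - a ≠ 0) (hmax : IsLocalMax (g lam a) x) :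
    x⁻¹ = lam * (logit x - logit a) :=
  sub_eq_zero.1 (hmax.hasDerivAt_eq_zero (hasDerivAt_g lam hx hx' ha ha'))

/-- Each update increases the logit of the mass on the good set by at least 1/λ. -/
theorem maximizer_logit_gain
    (lam a : ℝ) (hlam : 0 < lam) (ha : a ∈ Set.Ioo (0:ℝ) 1)
    (αs : ℝ) (hαs : αs ∈ Set.Ioo (0:ℝ) 1)
    (hmax : ∀ β ∈ Set.Ioo (0:ℝ) 1, g lam a β ≤ g lam a αs) :
    logit a + 1 / lam ≤ logit αs := by
  obtain ⟨ha0, ha1⟩ := ha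
  have hloc : IsLocalMax (g lam a) αs :=
    Filter.eventually_of_mem (isOpen_Ioo.mem_nhds hαs) hmax
  have hfoc := inv_eq_mul_logit_sub_of_isLocalMax hαs.1.ne' (sub_ne_zero.2 hαs.2.ne')
    ha0.ne' (sub_ne_zero.2 ha1.ne') hloc
  have hgain : 1 ≤ lam * (logit αs - logit a) :=
    hfoc ▸ (one_le_inv₀ hαs.1).2 hαs.2.le
  linarith [(div_le_iff₀' hlam).2 hgain]
end

section
/- Let Ω be a finite type, c : Ω → {0,1}, and P a PMF on Ω with p := Σ_y c(y)·P(y) > 0. Define Q(y) = c(y)·P(y)/p (the posterior under rejection sampling with filter c). Then for any PMF P' on Ω with P'(y) > 0 whenever Q(y) > 0: if Σ_y Q(y)·log P'(y) ≥ Σ_y Q(y)·log P(y), then log(Σ_y c(y)·P'(y)) ≥ log p. That is, improving the EM auxiliary objective cannot decrease the probability of satisfying the constraint. -/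
/-!
The constraint-satisfaction probability `p = ∑ c P` normalises the posterior `Q = c P / p`, so
`p' / p ≥ ∑ Q (P' / P)` (with equality at `P' = P`: the ELBO is tight there). Jensen's inequality
for the concave `log` turns this into `log p' - log p ≥ ∑ Q log (P' / P)`, and the right-hand side
is exactly the gain `J(P' | P) - J(P | P)` of the auxiliary objective.
-/

open Finset

namespace Real

variable {ι : Type*} {s : Finset ι} {w x : ι → ℝ}

theorem sum_mul_pos_of_sum_eq_one (hw : ∀ i ∈ s, 0 ≤ w i) (hw1 : ∑ i ∈ s, w i = 1)
    (hx : ∀ i ∈ s, 0 < w i → 0 < x i) : 0 < ∑ i ∈ s, w i * x i := by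
  obtain ⟨i, hi, hwi⟩ : ∃ i ∈ s, 0 < w i := by
    by_contra! h
    linarith [Finset.sum_nonpos h]
  refine Finset.sum_pos' (fun j hj => ?_) ⟨i, hi, mul_pos hwi (hx i hi hwi)⟩
  rcases (hw j hj).eq_or_lt with hwj | hwj
  · simp [← hwj]
  · exact (mul_pos hwj (hx j hj hwj)).le

theorem sum_mul_log_le_log_sum_mul (hw : ∀ i ∈ s, 0 ≤ w i) (hw1 : ∑ i ∈ s, w i = 1)
    (hx : ∀ i ∈ s, 0 < w i → 0 < x i) :
    ∑ i ∈ s, w i * log (x i) ≤ log (∑ i ∈ s, w i * x i) := by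
  have hsupport (f : ι → ℝ) : ∑ i ∈ s with 0 < w i, w i * f i = ∑ i ∈ s, w i * f i :=
    Finset.sum_filter_of_ne fun i hi h => (hw i hi).lt_of_ne' (left_ne_zero_of_mul h)
  rw [← hsupport, ← hsupport]
  refine strictConcaveOn_log_Ioi.concaveOn.le_map_sum (fun i hi => (hw i (mem_filter.1 hi).1))
    ?_ fun i hi => hx i (mem_filter.1 hi).1 (mem_filter.1 hi).2
  simpa [hw1] using hsupport fun _ => 1

end Real

section Posterior

variable {Ω : Type*} [Fintype Ω] (c P : Ω → ℝ)

noncomputable def posterior (y : Ω) : ℝ := c y * P y / ∑ z, c z * P z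

variable {c P}

theorem posterior_nonneg (hc : ∀ y, 0 ≤ c y) (hP : ∀ y, 0 ≤ P y) (y : Ω) :
    0 ≤ posterior c P y :=
  div_nonneg (mul_nonneg (hc y) (hP y)) (Finset.sum_nonneg fun z _ => mul_nonneg (hc z) (hP z))

theorem sum_posterior (hp : ∑ y, c y * P y ≠ 0) : ∑ y, posterior c P y = 1 := by
  simp only [posterior, ← Finset.sum_div, div_self hp]

theorem ne_zero_of_posterior_pos {y : Ω} (h : 0 < posterior c P y) : P y ≠ 0 := by
  rintro hPy
  simp [posterior, hPy] at h

theorem sum_posterior_mul_div_le {P' : Ω → ℝ} (hc : ∀ y, 0 ≤ c y) (hP : ∀ y, 0 ≤ P y)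
    (hP' : ∀ y, 0 ≤ P' y) :
    ∑ y, posterior c P y * (P' y / P y) ≤ (∑ y, c y * P' y) / ∑ y, c y * P y := by
  rw [Finset.sum_div]
  refine Finset.sum_le_sum fun y _ => ?_
  by_cases hPy : P y = 0
  · simp only [hPy, div_zero, mul_zero]
    exact div_nonneg (mul_nonneg (hc y) (hP' y))
      (Finset.sum_nonneg fun z _ => mul_nonneg (hc z) (hP z))
  · exact (by unfold posterior; field_simp : posterior c P y * (P' y / P y) = _).le

theorem sum_posterior_mul_log_sub_le {P' : Ω → ℝ} (hc : ∀ y, 0 ≤ c y) (hP : ∀ y, 0 ≤ P y)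
    (hP' : ∀ y, 0 ≤ P' y) (hp : 0 < ∑ y, c y * P y)
    (hpos : ∀ y, 0 < posterior c P y → 0 < P' y) :
    ∑ y, posterior c P y * (Real.log (P' y) - Real.log (P y))
      ≤ Real.log (∑ y, c y * P' y) - Real.log (∑ y, c y * P y) := by
  have hQ := posterior_nonneg hc hP
  have hQ1 : ∑ y, posterior c P y = 1 := sum_posterior hp.ne'
  have hratio (y) (_ : y ∈ univ) (hQy : 0 < posterior c P y) : 0 < P' y / P y :=
    div_pos (hpos y hQy) ((hP y).lt_of_ne' (ne_zero_of_posterior_pos hQy))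
  have hmean_pos : 0 < ∑ y, posterior c P y * (P' y / P y) :=
    Real.sum_mul_pos_of_sum_eq_one (fun y _ => hQ y) hQ1 hratio
  have hmean_le := sum_posterior_mul_div_le hc hP hP'
  have hp' : 0 < ∑ y, c y * P' y := (div_pos_iff_of_pos_right hp).1 (hmean_pos.trans_le hmean_le)
  calc ∑ y, posterior c P y * (Real.log (P' y) - Real.log (P y))
      = ∑ y, posterior c P y * Real.log (P' y / P y) := by
        refine Finset.sum_congr rfl fun y _ => ?_
        rcases (hQ y).eq_or_lt with hQy | hQy
        · simp [← hQy]
        · rw [Real.log_div (hpos y hQy).ne' (ne_zero_of_posterior_pos hQy)]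
    _ ≤ Real.log (∑ y, posterior c P y * (P' y / P y)) :=
        Real.sum_mul_log_le_log_sum_mul (fun y _ => hQ y) hQ1 hratio
    _ ≤ Real.log ((∑ y, c y * P' y) / ∑ y, c y * P y) := Real.log_le_log hmean_pos hmean_le
    _ = Real.log (∑ y, c y * P' y) - Real.log (∑ y, c y * P y) := Real.log_div hp'.ne' hp.ne'

end Posterior

theorem em_monotonicity_general
    {Ω : Type*} [Fintype Ω]
    (P : Ω → ℝ) (c : Ω → ℝ)
    (hP0 : ∀ y, 0 ≤ P y)
    (hc : ∀ y, c y = 0 ∨ c y = 1)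
    (hp : 0 < ∑ y, c y * P y)
    (P' : Ω → ℝ) (hP'0 : ∀ y, 0 ≤ P' y)
    (hpos : ∀ y, 0 < c y * P y / (∑ z, c z * P z) → 0 < P' y)
    (himp : ∑ y, (c y * P y / (∑ z, c z * P z)) * Real.log (P y)
        ≤ ∑ y, (c y * P y / (∑ z, c z * P z)) * Real.log (P' y)) :
    Real.log (∑ y, c y * P y) ≤ Real.log (∑ y, c y * P' y) := by
  have hc0 (y : Ω) : 0 ≤ c y := by rcases hc y with h | h <;> simp [h]
  have hgain := sum_posterior_mul_log_sub_le hc0 hP0 hP'0 hp hpos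
  simp only [posterior, mul_sub, Finset.sum_sub_distrib] at hgain
  linarith

/-- EM monotonicity: improving the auxiliary objective with respect to the
rejection-sampling posterior Q ∝ P·c cannot decrease the log-probability of
satisfying the constraint. -/
theorem em_monotonicity
    {Ω : Type*} [Fintype Ω]
    (P : Ω → ℝ) (c : Ω → ℝ)
    (hP0 : ∀ y, 0 ≤ P y) (hP1 : ∑ y, P y = 1)
    (hc : ∀ y, c y = 0 ∨ c y = 1)
    (hp : 0 < ∑ y, c y * P y)
    (P' : Ω → ℝ) (hP'0 : ∀ y, 0 ≤ P' y) (hP'1 : ∑ y, P' y = 1)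
    (hpos : ∀ y, 0 < c y * P y / (∑ z, c z * P z) → 0 < P' y)
    (himp : ∑ y, (c y * P y / (∑ z, c z * P z)) * Real.log (P y)
        ≤ ∑ y, (c y * P y / (∑ z, c z * P z)) * Real.log (P' y)) :
    Real.log (∑ y, c y * P y) ≤ Real.log (∑ y, c y * P' y) :=
  em_monotonicity_general P c hP0 hc hp P' hP'0 hpos himp
end

section
/- Let Ω be a finite type, Q a full-support PMF on Ω, A ⊆ Ω nonempty with nonempty complement, and λ > 0. For the objective F(P) = log P(A) − λ·KL(P‖Q) over PMFs P with P(A) > 0, any maximizer P* satisfies P*(y) > 0 for all y ∈ Ω. In particular, the update never collapses support onto A in finitely many steps. -/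
open Finset

/-!
If `P*` vanishes at `y₀`, move to the mixture `(1 - α) P* + α Q`. Since `P*(y₀) = 0`, the
`y₀`-term of the KL divergence becomes `α Q(y₀) log α`, while every other term is bounded by
convexity of `p ↦ p log (p / q)`. So the penalty decreases by `λ α Q(y₀) (-log α)` up to `O(α)`,
whereas `log P(A)` loses only `O(α)`. Because `-log α → ∞` as `α → 0⁺`, a small mixture beats `P*`.
-/

open Real

lemma convexOn_mul_log_div {q : ℝ} (hq : 0 < q) :
    ConvexOn ℝ (Set.Ici 0) fun p ↦ p * log (p / q) := by
  refine (convexOn_mul_log.sub ((LinearMap.mulRight ℝ (log q)).concaveOn (convex_Ici 0))).congr ?_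
  intro p hp
  rcases (Set.mem_Ici.1 hp).eq_or_lt with rfl | hp
  · simp
  · simp [log_div hp.ne' hq.ne', mul_sub]

lemma mul_log_div_mix_le {p q α : ℝ} (hp : 0 ≤ p) (hq : 0 < q) (hα₀ : 0 ≤ α) (hα₁ : α ≤ 1) :
    ((1 - α) * p + α * q) * log (((1 - α) * p + α * q) / q) ≤ (1 - α) * (p * log (p / q)) := by
  simpa [div_self hq.ne'] using
    (convexOn_mul_log_div hq).2 (Set.mem_Ici.2 hp) (Set.mem_Ici.2 hq.le) (by linarith) hα₀ (by ring)

lemma neg_two_mul_le_log_one_sub {α : ℝ} (hα₀ : 0 ≤ α) (hα : α ≤ 1 / 2) :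
    -(2 * α) ≤ log (1 - α) := by
  have h := one_sub_inv_le_log_of_pos (x := 1 - α) (by linarith)
  have : (1 - α)⁻¹ ≤ 1 + 2 * α := by
    rw [inv_eq_one_div, div_le_iff₀ (by linarith)]
    nlinarith
  linarith

lemma exists_log_le (c : ℝ) : ∃ α, 0 < α ∧ α ≤ 1 / 2 ∧ log α ≤ c := by
  obtain ⟨α, hlog, hα⟩ := ((tendsto_log_nhdsGT_zero.eventually_le_atBot c).and
    (Ioo_mem_nhdsGT (by norm_num : (0 : ℝ) < 1 / 2))).exists
  exact ⟨α, hα.1, hα.2.le, hlog⟩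

section Mixture

variable {Ω : Type*}

def mix (α : ℝ) (P Q : Ω → ℝ) (y : Ω) : ℝ := (1 - α) * P y + α * Q y

lemma sum_mix (α : ℝ) (P Q : Ω → ℝ) (s : Finset Ω) :
    ∑ y ∈ s, mix α P Q y = (1 - α) * ∑ y ∈ s, P y + α * ∑ y ∈ s, Q y := by
  simp only [mix, sum_add_distrib, mul_sum]

lemma KL_mix_le [Fintype Ω] {α : ℝ} {P Q : Ω → ℝ} {y₀ : Ω} (hP : ∀ y, 0 ≤ P y)
    (hQ : ∀ y, 0 < Q y) (hα₀ : 0 ≤ α) (hα₁ : α ≤ 1) (hy₀ : P y₀ = 0) :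
    KL (mix α P Q) Q ≤ (1 - α) * KL P Q + α * Q y₀ * log α := by
  classical
  have hmix₀ : mix α P Q y₀ * log (mix α P Q y₀ / Q y₀) = α * Q y₀ * log α := by
    simp [mix, hy₀, mul_div_assoc, div_self (hQ y₀).ne']
  have hrest : ∑ y ∈ univ.erase y₀, mix α P Q y * log (mix α P Q y / Q y)
      ≤ (1 - α) * ∑ y ∈ univ.erase y₀, P y * log (P y / Q y) := by
    rw [mul_sum]
    exact sum_le_sum fun y _ ↦ mul_log_div_mix_le (hP y) (hQ y) hα₀ hα₁
  unfold KL
  rw [← add_sum_erase _ _ (mem_univ y₀), ← add_sum_erase _ _ (mem_univ y₀), hmix₀, hy₀]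
  simp only [zero_mul, zero_add]
  linarith

lemma mix_nonneg {α : ℝ} {P Q : Ω → ℝ} (hP : ∀ y, 0 ≤ P y) (hQ : ∀ y, 0 ≤ Q y)
    (hα₀ : 0 ≤ α) (hα₁ : α ≤ 1) (y : Ω) : 0 ≤ mix α P Q y :=
  add_nonneg (mul_nonneg (by linarith) (hP y)) (mul_nonneg hα₀ (hQ y))

lemma mul_sum_le_sum_mix {α : ℝ} {P Q : Ω → ℝ} (s : Finset Ω) (hQ : ∀ y, 0 ≤ Q y)
    (hα₀ : 0 ≤ α) : (1 - α) * ∑ y ∈ s, P y ≤ ∑ y ∈ s, mix α P Q y := by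
  rw [sum_mix, le_add_iff_nonneg_right]
  exact mul_nonneg hα₀ (sum_nonneg fun y _ ↦ hQ y)

lemma obj_add_le_obj_mix [Fintype Ω] [DecidableEq Ω] {lam α : ℝ} {P Q : Ω → ℝ} {A : Finset Ω}
    {y₀ : Ω} (hlam : 0 ≤ lam) (hP : ∀ y, 0 ≤ P y) (hQ : ∀ y, 0 < Q y) (hα₀ : 0 ≤ α)
    (hα : α ≤ 1 / 2) (hPA : 0 < ∑ y ∈ A, P y) (hy₀ : P y₀ = 0) :
    obj lam Q A P + α * (lam * (KL P Q - Q y₀ * log α) - 2) ≤ obj lam Q A (mix α P Q) := by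
  have hlog : log (∑ y ∈ A, P y) - 2 * α ≤ log (∑ y ∈ A, mix α P Q y) := by
    have h := log_le_log (mul_pos (by linarith) hPA)
      (mul_sum_le_sum_mix A (fun y ↦ (hQ y).le) hα₀)
    rw [log_mul (by linarith) hPA.ne'] at h
    linarith [neg_two_mul_le_log_one_sub hα₀ hα]
  have hKL := mul_le_mul_of_nonneg_left (KL_mix_le hP hQ hα₀ (by linarith) hy₀) hlam
  unfold obj
  linarith

end Mixture

theorem maximizer_full_support_general
    {Ω : Type*} [Fintype Ω] [DecidableEq Ω]
    (lam : ℝ) (hlam : 0 < lam)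
    (Q : Ω → ℝ) (hQpos : ∀ y, 0 < Q y) (hQ1 : ∑ y, Q y = 1)
    (A : Finset Ω)
    (Pstar : Ω → ℝ) (hPstar0 : ∀ y, 0 ≤ Pstar y) (hPstar1 : ∑ y, Pstar y = 1)
    (hPstarA : 0 < ∑ y ∈ A, Pstar y)
    (hmax : ∀ P : Ω → ℝ, (∀ y, 0 ≤ P y) → (∑ y, P y) = 1 →
      (0 < ∑ y ∈ A, P y) → obj lam Q A P ≤ obj lam Q A Pstar) :
    ∀ y, 0 < Pstar y := by
  intro y₀
  by_contra! hy₀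
  replace hy₀ : Pstar y₀ = 0 := le_antisymm hy₀ (hPstar0 y₀)
  have hlamq : 0 < lam * Q y₀ := mul_pos hlam (hQpos y₀)
  obtain ⟨α, hα₀, hα, hlogα⟩ := exists_log_le ((lam * KL Pstar Q - 3) / (lam * Q y₀))
  have hgain : 1 ≤ lam * (KL Pstar Q - Q y₀ * log α) - 2 := by
    rw [le_div_iff₀ hlamq] at hlogα
    linarith
  have hQ₀ : ∀ y, 0 ≤ Q y := fun y ↦ (hQpos y).le
  have hle := hmax (mix α Pstar Q) (mix_nonneg hPstar0 hQ₀ hα₀.le (by linarith))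
    (by rw [sum_mix, hPstar1, hQ1]; ring)
    ((mul_pos (by linarith) hPstarA).trans_le (mul_sum_le_sum_mix A hQ₀ hα₀.le))
  have hgt := obj_add_le_obj_mix (A := A) hlam.le hPstar0 hQpos hα₀.le hα hPstarA hy₀
  have := mul_le_mul_of_nonneg_left hgain hα₀.le
  linarith

/-- Any maximizer of log P(A) − λ KL(P‖Q) over PMFs with P(A) > 0 has full
support: the update never collapses support onto A in finitely many steps. -/
theorem maximizer_full_support
    {Ω : Type*} [Fintype Ω] [DecidableEq Ω]
    (lam : ℝ) (hlam : 0 < lam)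
    (Q : Ω → ℝ) (hQpos : ∀ y, 0 < Q y) (hQ1 : ∑ y, Q y = 1)
    (A : Finset Ω) (hA : A.Nonempty) (hB : Aᶜ.Nonempty)
    (Pstar : Ω → ℝ) (hPstar0 : ∀ y, 0 ≤ Pstar y) (hPstar1 : ∑ y, Pstar y = 1)
    (hPstarA : 0 < ∑ y ∈ A, Pstar y)
    (hmax : ∀ P : Ω → ℝ, (∀ y, 0 ≤ P y) → (∑ y, P y) = 1 →
      (0 < ∑ y ∈ A, P y) → obj lam Q A P ≤ obj lam Q A Pstar) :
    ∀ y, 0 < Pstar y :=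
  maximizer_full_support_general lam hlam Q hQpos hQ1 A Pstar hPstar0 hPstar1 hPstarA hmax
end
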